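/- arXiv:1601.06564 — 2 statements merged into one kernel-verified Lean document; each statement's English description precedes it below -/
import Mathlib

section
/- The sequences (o_i)_{i≥1} and (d_i)_{i≥1} are well defined and satisfy 0 > o_1 > o_3 > o_5 > ⋯ and 0 < o_2 < o_4 < o_6 < ⋯ (so that in particular the integers o_1, o_2, o_3, … are pairwise distinct), and 0 < d_1 < d_2 < d_3 < ⋯. -/
/-- The sum d_2 + d_4 + ⋯ over even indices j with 1 ≤ j ≤ n. -/
def evenSum (d : ℕ → ℤ) (n : ℕ) : ℤ := ∑ j ∈ Finset.Icc 1 n, if Even j then d j else 0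

/-- The sum d_1 + d_3 + ⋯ over odd indices j with 1 ≤ j ≤ n. -/
def oddSum (d : ℕ → ℤ) (n : ℕ) : ℤ := ∑ j ∈ Finset.Icc 1 n, if Odd j then d j else 0

/-- The pair of sequences `(o, d)` (indexed from 1) satisfies the recursive definition:
`o 1 = -1`, `o 2 = 2`, `d 1 = 1`, and for `i ≥ 2`:
`o (i+1) = o (i-1) + i·(d 2 + d 4 + ⋯ + d (i-1))` if `i` is odd,
`o (i+1) = o (i-1) - i·(d 1 + d 3 + ⋯ + d (i-1))` if `i` is even,
and `d i = i·|o i − o (i+1)|`. -/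
def IsOD (o d : ℕ → ℤ) : Prop :=
  o 1 = -1 ∧ o 2 = 2 ∧ d 1 = 1 ∧
  (∀ i : ℕ, 2 ≤ i → Odd i → o (i + 1) = o (i - 1) + (i : ℤ) * evenSum d (i - 1)) ∧
  (∀ i : ℕ, 2 ≤ i → Even i → o (i + 1) = o (i - 1) - (i : ℤ) * oddSum d (i - 1)) ∧
  (∀ i : ℕ, 2 ≤ i → d i = (i : ℤ) * |o i - o (i + 1)|)

def oAux : ℕ → ℤ
  | 0 => 0
  | 1 => -1
  | 2 => 2
  | (n+3) =>
    if Odd (n+2) then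
      oAux (n+1) + ((n:ℤ)+2) * ∑ j ∈ (Finset.Icc 1 (n+1)).attach,
        if Even j.1 then (if j.1 = 1 then (1:ℤ) else (j.1:ℤ) * |oAux j.1 - oAux (j.1+1)|) else 0
    else
      oAux (n+1) - ((n:ℤ)+2) * ∑ j ∈ (Finset.Icc 1 (n+1)).attach,
        if Odd j.1 then (if j.1 = 1 then (1:ℤ) else (j.1:ℤ) * |oAux j.1 - oAux (j.1+1)|) else 0
  decreasing_by
    all_goals (try (rename_i j he hne; obtain ⟨j,hj⟩ := j; simp [Finset.mem_Icc] at hj ⊢)) <;> (try simp) <;> omega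

def dDef (n : ℕ) : ℤ := if n = 1 then 1 else (n:ℤ) * |oAux n - oAux (n+1)|

lemma oAux_succ (n : ℕ) : oAux (n+3) =
    if Odd (n+2) then oAux (n+1) + ((n:ℤ)+2) * evenSum dDef (n+1)
    else oAux (n+1) - ((n:ℤ)+2) * oddSum dDef (n+1) := by
  rw [oAux]
  unfold evenSum oddSum dDef
  split
  · congr 1; congr 1
    exact Finset.sum_attach (Finset.Icc 1 (n+1))
      (fun j => if Even j then (if j = 1 then (1:ℤ) else (j:ℤ) * |oAux j - oAux (j+1)|) else 0)
  · congr 1; congr 1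
    exact Finset.sum_attach (Finset.Icc 1 (n+1))
      (fun j => if Odd j then (if j = 1 then (1:ℤ) else (j:ℤ) * |oAux j - oAux (j+1)|) else 0)

lemma exists_od : IsOD oAux dDef := by
  refine ⟨by simp [oAux], by simp [oAux], by simp [dDef], ?_, ?_, ?_⟩
  · intro i hi ho
    obtain ⟨n, rfl⟩ : ∃ n, i = n + 2 := ⟨i - 2, by omega⟩
    have := oAux_succ n
    rw [if_pos ho] at this
    have h1 : n + 2 + 1 = n + 3 := by omega
    have h2 : n + 2 - 1 = n + 1 := by omega
    rw [h1, h2, this]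
    push_cast; ring
  · intro i hi he
    obtain ⟨n, rfl⟩ : ∃ n, i = n + 2 := ⟨i - 2, by omega⟩
    have := oAux_succ n
    rw [if_neg (by simpa [Nat.even_iff, Nat.odd_iff] using he)] at this
    have h1 : n + 2 + 1 = n + 3 := by omega
    have h2 : n + 2 - 1 = n + 1 := by omega
    rw [h1, h2, this]
    push_cast; ring
  · intro i hi
    rw [dDef, if_neg (by omega)]

lemma oddSum_pos (d : ℕ → ℤ) (m : ℕ) (hm : 1 ≤ m)
    (hpos : ∀ j, 1 ≤ j → j ≤ m → 0 < d j) : 0 < oddSum d m := by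
  unfold oddSum
  apply Finset.sum_pos'
  · intro j hj
    simp only [Finset.mem_Icc] at hj
    split
    · exact (hpos j hj.1 hj.2).le
    · exact le_rfl
  · exact ⟨1, by simp [Finset.mem_Icc]; omega, by simpa using hpos 1 le_rfl hm⟩

lemma evenSum_pos (d : ℕ → ℤ) (m : ℕ) (hm : 2 ≤ m)
    (hpos : ∀ j, 1 ≤ j → j ≤ m → 0 < d j) : 0 < evenSum d m := by
  unfold evenSum
  apply Finset.sum_pos'
  · intro j hj
    simp only [Finset.mem_Icc] at hj
    split
    · exact (hpos j hj.1 hj.2).le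
    · exact le_rfl
  · refine ⟨2, by simp [Finset.mem_Icc]; omega, ?_⟩
    simpa using hpos 2 (by omega) hm

lemma key (o d : ℕ → ℤ) (h : IsOD o d) : ∀ n : ℕ,
    (Odd n → o n < 0) ∧ (1 ≤ n → Even n → 0 < o n) ∧ (2 ≤ n → 0 < d (n - 1)) := by
  obtain ⟨h1, h2, hd1, hodd, heven, hd⟩ := h
  intro n
  induction n using Nat.strong_induction_on with
  | _ n ih =>
    match n, ih with
    | 0, _ => exact ⟨by simp [Nat.odd_iff], by omega, by omega⟩
    | 1, _ => exact ⟨fun _ => by rw [h1]; norm_num, fun _ he => absurd he (by decide), by omega⟩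
    | 2, _ => exact ⟨fun ho => absurd ho (by decide), fun _ _ => by rw [h2]; norm_num,
        fun _ => by simpa [hd1] using (by norm_num : (0:ℤ) < 1)⟩
    | (m+3), ih =>
      have dpos : ∀ j, 1 ≤ j → j ≤ m + 1 → 0 < d j := by
        intro j hj1 hj2
        simpa using (ih (j+1) (by omega)).2.2 (by omega)
      have hOm2 : m + 2 + 1 = m + 3 := by omega
      have hOm1 : m + 2 - 1 = m + 1 := by omega
      have hm2pos : (0:ℤ) < (m+2:ℕ) := by exact_mod_cast Nat.succ_pos (m+1)
      rcases Nat.even_or_odd (m+2) with he | ho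
      · -- m+2 even, m+3 odd
        have e := heven (m+2) (by omega) he
        rw [hOm2, hOm1] at e
        have hSum : 0 < oddSum d (m+1) := oddSum_pos d (m+1) (by omega) dpos
        have hOddm1 : Odd (m+1) := by
          rw [Nat.even_iff] at he; rw [Nat.odd_iff]; omega
        have hprev : o (m+1) < 0 := (ih (m+1) (by omega)).1 hOddm1
        have hneg : o (m+3) < 0 := by
          rw [e]; nlinarith [mul_pos hm2pos hSum]
        have hEvm2pos : 0 < o (m+2) := (ih (m+2) (by omega)).2.1 (by omega) he
        refine ⟨fun _ => hneg, fun _ hev => ?_, fun _ => ?_⟩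
        · rw [Nat.even_iff] at hev he; omega
        · have := hd (m+2) (by omega)
          rw [hOm2] at this
          show (0:ℤ) < d (m+2)
          rw [this]
          exact mul_pos hm2pos (abs_pos.mpr (by intro hc; rw [sub_eq_zero] at hc; linarith))
      · -- m+2 odd, m+3 even
        have e := hodd (m+2) (by omega) ho
        rw [hOm2, hOm1] at e
        have hm1 : 1 ≤ m := by rw [Nat.odd_iff] at ho; omega
        have hSum : 0 < evenSum d (m+1) := evenSum_pos d (m+1) (by omega) dpos
        have hEvm1 : Even (m+1) := by
          rw [Nat.odd_iff] at ho; rw [Nat.even_iff]; omega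
        have hprev : 0 < o (m+1) := (ih (m+1) (by omega)).2.1 (by omega) hEvm1
        have hposn : 0 < o (m+3) := by
          rw [e]; nlinarith [mul_pos hm2pos hSum]
        have hOm2neg : o (m+2) < 0 := (ih (m+2) (by omega)).1 ho
        refine ⟨fun hoo => ?_, fun _ _ => hposn, fun _ => ?_⟩
        · rw [Nat.odd_iff] at hoo ho; omega
        · have := hd (m+2) (by omega)
          rw [hOm2] at this
          show (0:ℤ) < d (m+2)
          rw [this]
          exact mul_pos hm2pos (abs_pos.mpr (by intro hc; rw [sub_eq_zero] at hc; linarith))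

lemma dpos_all (o d : ℕ → ℤ) (h : IsOD o d) : ∀ j, 1 ≤ j → 0 < d j := by
  intro j hj
  simpa using (key o d h (j+1)).2.2 (by omega)

lemma steps (o d : ℕ → ℤ) (h : IsOD o d) :
    (∀ i, 1 ≤ i → Odd i → o (i+2) < o i) ∧ (∀ i, 1 ≤ i → Even i → o i < o (i+2)) := by
  obtain ⟨h1, h2, hd1, hodd, heven, hd⟩ := h
  have dpos := dpos_all o d ⟨h1, h2, hd1, hodd, heven, hd⟩
  constructor
  · intro i hi ho
    have he1 : Even (i+1) := by rw [Nat.odd_iff] at ho; rw [Nat.even_iff]; omega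
    have e := heven (i+1) (by omega) he1
    have hh1 : i + 1 + 1 = i + 2 := by omega
    have hh2 : i + 1 - 1 = i := by omega
    rw [hh1, hh2] at e
    have hSum : 0 < oddSum d i := oddSum_pos d i hi (fun j a _ => dpos j a)
    have : (0:ℤ) < (i+1:ℕ) := by exact_mod_cast Nat.succ_pos i
    rw [e]; nlinarith [mul_pos this hSum]
  · intro i hi he
    have hi2 : 2 ≤ i := by rw [Nat.even_iff] at he; omega
    have ho1 : Odd (i+1) := by rw [Nat.even_iff] at he; rw [Nat.odd_iff]; omega
    have e := hodd (i+1) (by omega) ho1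
    have hh1 : i + 1 + 1 = i + 2 := by omega
    have hh2 : i + 1 - 1 = i := by omega
    rw [hh1, hh2] at e
    have hSum : 0 < evenSum d i := evenSum_pos d i hi2 (fun j a _ => dpos j a)
    have : (0:ℤ) < (i+1:ℕ) := by exact_mod_cast Nat.succ_pos i
    rw [e]; nlinarith [mul_pos this hSum]

lemma d_incr (o d : ℕ → ℤ) (h : IsOD o d) : ∀ i, 1 ≤ i → d i < d (i+1) := by
  have h' := h
  obtain ⟨h1, h2, hd1, hodd, heven, hd⟩ := h
  have hkey := key o d h'
  have hsteps := steps o d h'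
  intro i hi
  rcases eq_or_lt_of_le hi with h1' | h2'
  · -- i = 1
    have hi1 : i = 1 := h1'.symm
    subst hi1
    have hsum : oddSum d 1 = d 1 := by simp [oddSum]
    have e := heven 2 (by norm_num) (by decide)
    norm_num at e
    rw [hsum, hd1, h1] at e
    norm_num at e
    have e2 := hd 2 (by norm_num)
    norm_num at e2
    rw [hd1, e2, h2, e]
    norm_num
  · -- i ≥ 2
    have hi2 : 2 ≤ i := h2'
    have e1 := hd i hi2
    have e2 := hd (i+1) (by omega)
    rcases Nat.even_or_odd i with he | ho
    · -- i even : o i > 0, o (i+1) < 0, o (i+2) > o i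
      have ha : 0 < o i := (hkey i).2.1 (by omega) he
      have hb : o (i+1) < 0 := (hkey (i+1)).1 (by rw [Nat.even_iff] at he; rw [Nat.odd_iff]; omega)
      have hc : o i < o (i+2) := hsteps.2 i (by omega) he
      rw [e1, e2]
      rw [abs_of_pos (by linarith), abs_of_neg (by linarith)]
      have hci : (2:ℤ) ≤ (i:ℕ) := by exact_mod_cast hi2
      push_cast
      nlinarith
    · -- i odd
      have ha : o i < 0 := (hkey i).1 ho
      have hb : 0 < o (i+1) := (hkey (i+1)).2.1 (by omega)
        (by rw [Nat.odd_iff] at ho; rw [Nat.even_iff]; omega)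
      have hc : o (i+2) < o i := hsteps.1 i (by omega) ho
      rw [e1, e2]
      rw [abs_of_neg (by linarith), abs_of_pos (by linarith)]
      have hci : (2:ℤ) ≤ (i:ℕ) := by exact_mod_cast hi2
      push_cast
      nlinarith

/-- The sequences `(o_i)_{i ≥ 1}` and `(d_i)_{i ≥ 1}` are well defined (they exist and are
unique for indices `i ≥ 1`), and they satisfy `0 > o 1 > o 3 > ⋯`, `0 < o 2 < o 4 < ⋯`
(so in particular the `o i` are pairwise distinct), and `0 < d 1 < d 2 < ⋯`. -/
theorem stmt_0 :
    (∃ o d : ℕ → ℤ, IsOD o d) ∧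
    (∀ o d o' d' : ℕ → ℤ, IsOD o d → IsOD o' d' →
      ∀ i : ℕ, 1 ≤ i → o i = o' i ∧ d i = d' i) ∧
    (∀ o d : ℕ → ℤ, IsOD o d →
      (∀ i : ℕ, 1 ≤ i → Odd i → o i < 0 ∧ o (i + 2) < o i) ∧
      (∀ i : ℕ, 1 ≤ i → Even i → 0 < o i ∧ o i < o (i + 2)) ∧
      (∀ i : ℕ, 1 ≤ i → 0 < d i ∧ d i < d (i + 1))) := by
  refine ⟨⟨oAux, dDef, exists_od⟩, ?_, ?_⟩
  · intro o d o' d' h h'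
    obtain ⟨h1, h2, hd1, hodd, heven, hd⟩ := h
    obtain ⟨h1', h2', hd1', hodd', heven', hd'⟩ := h'
    have ho : ∀ n, 1 ≤ n → o n = o' n := by
      intro n
      induction n using Nat.strong_induction_on with
      | _ n ih =>
        match n, ih with
        | 0, _ => omega
        | 1, _ => intro _; rw [h1, h1']
        | 2, _ => intro _; rw [h2, h2']
        | (m+3), ih =>
          intro _
          have hdu : ∀ j, 1 ≤ j → j ≤ m + 1 → d j = d' j := by
            intro j hj1 hj2
            rcases eq_or_lt_of_le hj1 with hj | hj
            · rw [← hj, hd1, hd1']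
            · rw [hd j (by omega), hd' j (by omega), ih j (by omega) (by omega),
                ih (j+1) (by omega) (by omega)]
          have hOm2 : m + 2 + 1 = m + 3 := by omega
          have hOm1 : m + 2 - 1 = m + 1 := by omega
          rcases Nat.even_or_odd (m+2) with he | ho2
          · have e := heven (m+2) (by omega) he
            have e' := heven' (m+2) (by omega) he
            rw [hOm2, hOm1] at e e'
            rw [e, e', ih (m+1) (by omega) (by omega)]
            congr 1
            unfold oddSum
            refine congrArg _ (Finset.sum_congr rfl ?_)
            intro j hj
            simp only [Finset.mem_Icc] at hj
            split_ifs
            · exact hdu j hj.1 hj.2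
            · rfl
          · have e := hodd (m+2) (by omega) ho2
            have e' := hodd' (m+2) (by omega) ho2
            rw [hOm2, hOm1] at e e'
            rw [e, e', ih (m+1) (by omega) (by omega)]
            congr 1
            unfold evenSum
            refine congrArg _ (Finset.sum_congr rfl ?_)
            intro j hj
            simp only [Finset.mem_Icc] at hj
            split_ifs
            · exact hdu j hj.1 hj.2
            · rfl
    intro i hi
    refine ⟨ho i hi, ?_⟩
    rcases eq_or_lt_of_le hi with hj | hj
    · rw [← hj, hd1, hd1']
    · rw [hd i (by omega), hd' i (by omega), ho i (by omega), ho (i+1) (by omega)]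
  · intro o d h
    have hkey := key o d h
    have hsteps := steps o d h
    refine ⟨fun i hi ho => ⟨(hkey i).1 ho, hsteps.1 i hi ho⟩,
      fun i hi he => ⟨(hkey i).2.1 hi he, hsteps.2 i hi he⟩,
      fun i hi => ⟨dpos_all o d h i hi, d_incr o d h i hi⟩⟩
end

section
/- For even i ≥ 2 write Σ_i = d_2 + d_4 + ⋯ + d_i and D_i = (i+1)·Σ_i. Then for all sufficiently large even i, (exp((i/2)·Σ_i) + 1)·2^{−D_i} ≤ 2·exp(i·Σ_i·(1/2 − log 2)) < exp(−d_i). -/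
open Real

/-! The sign pattern `o (2k+1) ≤ -1 < 2 ≤ o (2k+2)` propagates through the recursion because the
partial sums of `d` are nonnegative; it gives `|o i - o (i+1)| ≥ 1`, hence `d i ≥ 1` and
`Σ_i ≥ d i ≥ 1`. With `2 ^ (-D_i) = exp (-(i+1) Σ_i log 2)` the first inequality is then
`exp (x) + 1 ≤ 2 exp (x)` for `x ≥ 0`, and the second holds once `i (log 2 - 1/2) Σ_i` beats
`Σ_i + log 2`, which happens for `i ≥ 10` since `log 2 - 1/2 > 0.19`. -/

lemma evenSum_nonneg {d : ℕ → ℤ} (hd : ∀ j, 1 ≤ j → 0 ≤ d j) (n : ℕ) : 0 ≤ evenSum d n :=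
  Finset.sum_nonneg fun j hj => by
    split_ifs
    exacts [hd j (Finset.mem_Icc.mp hj).1, le_rfl]

lemma oddSum_nonneg {d : ℕ → ℤ} (hd : ∀ j, 1 ≤ j → 0 ≤ d j) (n : ℕ) : 0 ≤ oddSum d n :=
  Finset.sum_nonneg fun j hj => by
    split_ifs
    exacts [hd j (Finset.mem_Icc.mp hj).1, le_rfl]

lemma le_evenSum {d : ℕ → ℤ} (hd : ∀ j, 1 ≤ j → 0 ≤ d j) {i : ℕ} (hi : 1 ≤ i) (he : Even i) :
    d i ≤ evenSum d i := by
  have := Finset.single_le_sum (f := fun j => if Even j then d j else 0)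
    (fun j hj => by
      split_ifs
      exacts [hd j (Finset.mem_Icc.mp hj).1, le_rfl])
    (Finset.mem_Icc.mpr ⟨hi, le_rfl⟩)
  simpa [evenSum, he] using this

namespace IsOD

variable {o d : ℕ → ℤ} (h : IsOD o d)
include h

lemma d_nonneg {j : ℕ} (hj : 1 ≤ j) : 0 ≤ d j := by
  obtain ⟨-, -, h1, -, -, hd⟩ := h
  rcases hj.eq_or_lt with rfl | hj
  · rw [h1]; norm_num
  · rw [hd j hj]; positivity

lemma sign_pattern (k : ℕ) : o (2 * k + 1) ≤ -1 ∧ 2 ≤ o (2 * k + 2) := by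
  have hd : ∀ j, 1 ≤ j → 0 ≤ d j := fun j hj => h.d_nonneg hj
  obtain ⟨ho1, ho2, -, hodd, heven, -⟩ := h
  induction k with
  | zero => simp [ho1, ho2]
  | succ k ih =>
    have hnext_odd := heven (2 * k + 2) (by omega) (by simp [parity_simps])
    have hnext_even := hodd (2 * k + 3) (by omega) (by simp [parity_simps])
    have hodd_sum := oddSum_nonneg hd (2 * k + 1)
    have heven_sum := evenSum_nonneg hd (2 * k + 2)
    simp only [show 2 * k + 2 - 1 = 2 * k + 1 by omega,
      show 2 * k + 3 - 1 = 2 * k + 2 by omega] at hnext_odd hnext_even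
    refine ⟨?_, ?_⟩
    · rw [show 2 * (k + 1) + 1 = 2 * k + 2 + 1 by ring, hnext_odd]
      nlinarith [ih.1]
    · rw [show 2 * (k + 1) + 2 = 2 * k + 3 + 1 by ring, hnext_even]
      nlinarith [ih.2]

lemma one_le_d {i : ℕ} (hi : 1 ≤ i) : 1 ≤ d i := by
  have hsign := h.sign_pattern
  obtain ⟨-, -, h1, -, -, hd⟩ := h
  rcases hi.eq_or_lt with rfl | hi
  · exact h1.ge
  have hgap : 1 ≤ |o i - o (i + 1)| := by
    obtain ⟨k, hk | hk⟩ := Nat.even_or_odd' (i - 1)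
    · obtain rfl : i = 2 * k + 1 := by omega
      have hlo : o (2 * k + 1) ≤ -1 := (hsign k).1
      have hhi : 2 ≤ o (2 * k + 1 + 1) := (hsign k).2
      exact le_abs.mpr (Or.inr (by omega))
    · obtain rfl : i = 2 * k + 2 := by omega
      have hhi : 2 ≤ o (2 * k + 2) := (hsign k).2
      have hlo : o (2 * k + 2 + 1) ≤ -1 := (hsign (k + 1)).1
      exact le_abs.mpr (Or.inl (by omega))
  rw [hd i hi]
  nlinarith [(Nat.one_le_cast (α := ℤ)).mpr hi.le]

end IsOD

lemma exp_add_one_mul_two_zpow_le (n : ℕ) {s : ℤ} (hs : 0 ≤ s) :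
    (exp ((n : ℝ) / 2 * s) + 1) * (2 : ℝ) ^ (-(((n : ℤ) + 1) * s)) ≤
      2 * exp ((n : ℝ) * s * (1 / 2 - log 2)) := by
  have hs' : (0 : ℝ) ≤ s := by exact_mod_cast hs
  have hzpow : (2 : ℝ) ^ (-(((n : ℤ) + 1) * s)) = exp (-((n + 1) * s * log 2)) := by
    rw [← Real.rpow_intCast, Real.rpow_def_of_pos two_pos]
    push_cast
    ring_nf
  have hexp : exp ((n : ℝ) / 2 * s) + 1 ≤ 2 * exp ((n : ℝ) / 2 * s) := by
    linarith [one_le_exp (by positivity : (0 : ℝ) ≤ n / 2 * s)]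
  have hlog : (0 : ℝ) ≤ s * log 2 := mul_nonneg hs' (log_nonneg one_le_two)
  calc (exp ((n : ℝ) / 2 * s) + 1) * (2 : ℝ) ^ (-(((n : ℤ) + 1) * s))
      ≤ 2 * exp ((n : ℝ) / 2 * s) * exp (-((n + 1) * s * log 2)) := by
        rw [hzpow]; gcongr
    _ = 2 * exp ((n : ℝ) * s * (1 / 2 - log 2) - s * log 2) := by
        rw [mul_assoc, ← exp_add]; ring_nf
    _ ≤ 2 * exp ((n : ℝ) * s * (1 / 2 - log 2)) := by
        gcongr; linarith

lemma two_mul_exp_lt_exp_neg {x s t : ℝ} (hx : 10 ≤ x) (hs : 1 ≤ s) (ht : t ≤ s) :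
    2 * exp (x * s * (1 / 2 - log 2)) < exp (-t) := by
  rw [show 2 * exp (x * s * (1 / 2 - log 2)) = exp (log 2 + x * s * (1 / 2 - log 2)) by
    rw [exp_add, exp_log two_pos], exp_lt_exp]
  have hlog₁ := log_two_gt_d9
  have hlog₂ := log_two_lt_d9
  nlinarith [mul_nonneg (mul_nonneg (sub_nonneg.mpr hx) (by linarith : (0 : ℝ) ≤ s))
    (by linarith : (0 : ℝ) ≤ log 2 - 1 / 2)]

/-- With `Σ_i = d 2 + d 4 + ⋯ + d i` and `D_i = (i+1)·Σ_i`, for all sufficiently large even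
`i`: `(exp((i/2)·Σ_i) + 1) · 2^{-D_i} ≤ 2·exp(i·Σ_i·(1/2 − log 2)) < exp(−d_i)`. -/
theorem stmt_10 (o d : ℕ → ℤ) (h : IsOD o d) :
    ∃ N : ℕ, ∀ i : ℕ, N ≤ i → Even i →
      (Real.exp ((i : ℝ) / 2 * (evenSum d i : ℝ)) + 1) *
          (2 : ℝ) ^ (-(((i : ℤ) + 1) * evenSum d i)) ≤
        2 * Real.exp ((i : ℝ) * (evenSum d i : ℝ) * (1 / 2 - Real.log 2)) ∧
      2 * Real.exp ((i : ℝ) * (evenSum d i : ℝ) * (1 / 2 - Real.log 2)) <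
        Real.exp (-(d i : ℝ)) := by
  refine ⟨10, fun i hi he => ?_⟩
  have hd : ∀ j, 1 ≤ j → 0 ≤ d j := fun _ => h.d_nonneg
  have hdi : d i ≤ evenSum d i := le_evenSum hd (by omega) he
  have hSi : 1 ≤ evenSum d i := (h.one_le_d (by omega)).trans hdi
  refine ⟨exp_add_one_mul_two_zpow_le i (evenSum_nonneg hd i), ?_⟩
  exact two_mul_exp_lt_exp_neg (by exact_mod_cast hi) (by exact_mod_cast hSi)
    (by exact_mod_cast hdi)
end
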